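/- Let {φ_n} be convex functions ℝ^d → ℝ with φ_n(0) = 0 and ∂φ_n(ℝ^d) ⊆ S for a compact set S ⊂ ℝ^d. Let K ⊂ ℝ^d be compact, K' compact with K ⊂ Int(K'), and suppose φ_n → φ uniformly on K' for a convex φ. Then ∂φ(K) ⊆ S, and for every δ > 0 there exists n₀ such that ∂φ_n(K) ⊆ ∪_{x ∈ ∂φ(K)} B_δ(x) for all n ≥ n₀. -/

import Mathlib

/-!
For `∂φ(K) ⊆ S`, take `ξ ∈ ∂φ(u)` and minimize `φ_N - ⟪ξ, ·⟫ + τ‖· - u‖²` over a ball `B(u, r)`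
on which `φ_N` is uniformly close to `φ`. When `φ_N` is close enough the minimizer `x` lies in the
open ball, so it is a local minimizer, and convexity makes `ξ - 2τ(x - u)` a subgradient of `φ_N`
at `x`; it lies in `S` and within `2τr` of `ξ`. Since `S` is closed, `ξ ∈ S`.

For the second half, if the conclusion failed there would be `ξ_k ∈ ∂φ_{n_k}(u_k)` with `u_k ∈ K`
staying `δ` away from `∂φ(K)`. By compactness of `K × S` a subsequence converges to some `(u, ξ)`,
and passing to the limit in the subgradient inequalities on a ball around `u` shows
`ξ ∈ ∂φ(u)`, a contradiction. In both halves a subgradient inequality that holds only near the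
base point is promoted to a global one by convexity, restricting to a short segment.
-/

open scoped RealInnerProductSpace
open Filter

noncomputable section

abbrev E (d : ℕ) : Type := EuclideanSpace ℝ (Fin d)

/-- Subdifferential of a real-valued function at a point. -/
def subdiffR {d : ℕ} (f : E d → ℝ) (x : E d) : Set (E d) :=
  {ξ | ∀ y : E d, f x + ⟪ξ, y - x⟫ ≤ f y}

/-- Subdifferential of an `EReal`-valued function at a point. -/
def subdiffE {d : ℕ} (f : E d → EReal) (x : E d) : Set (E d) :=
  {ξ | ∀ y : E d, f x + ((⟪ξ, y - x⟫ : ℝ) : EReal) ≤ f y}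

/-- Convexity of an `EReal`-valued function. -/
def ConvexE {d : ℕ} (f : E d → EReal) : Prop :=
  ∀ x y : E d, ∀ a b : ℝ, 0 ≤ a → 0 ≤ b → a + b = 1 →
    f (a • x + b • y) ≤ (a : EReal) * f x + (b : EReal) * f y

open scoped Topology
open Metric Set AffineMap

lemma EReal.add_coe_le_iff_toReal {a b : EReal} (ha : a ≠ ⊤ ∧ a ≠ ⊥) (hb : b ≠ ⊤ ∧ b ≠ ⊥)
    (c : ℝ) : a + c ≤ b ↔ a.toReal + c ≤ b.toReal := by
  lift a to ℝ using ha
  lift b to ℝ using hb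
  norm_cast

lemma EReal.add_coe_le_of_add_le_lineMap {a c t : ℝ} {β : EReal} (ht : 0 < t)
    (h : (a : EReal) + ((t * c : ℝ) : EReal) ≤ ((1 - t : ℝ) : EReal) * a + (t : EReal) * β) :
    (a : EReal) + c ≤ β := by
  induction β using EReal.rec with
  | bot =>
    rw [EReal.mul_bot_of_pos (by exact_mod_cast ht), EReal.add_bot] at h
    exact absurd h (not_le.2 (EReal.bot_lt_coe _))
  | coe b =>
    norm_cast at h ⊢
    nlinarith
  | top => exact le_top

lemma eventually_lineMap_nhdsGT {F : Type*} [NormedAddCommGroup F] [NormedSpace ℝ F]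
    {P : F → Prop} {x : F} (h : ∀ᶠ z in 𝓝 x, P z) (y : F) :
    ∀ᶠ t in 𝓝[>] (0 : ℝ), t ∈ Ioo 0 1 ∧ P (lineMap x y t) := by
  have hlim : Tendsto (lineMap x y) (𝓝[>] (0 : ℝ)) (𝓝 x) :=
    (lineMap_continuous.tendsto' 0 x (lineMap_apply_zero x y)).mono_left nhdsWithin_le_nhds
  exact (eventually_mem_set.2 (Ioo_mem_nhdsGT one_pos)).and (hlim.eventually h)

variable {d : ℕ}

lemma mem_subdiffR_of_eventually_le_add_sq {f : E d → ℝ} (hf : ConvexOn ℝ univ f) {x s : E d}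
    {τ : ℝ} (h : ∀ᶠ y in 𝓝 x, f x + ⟪s, y - x⟫ ≤ f y + τ * ‖y - x‖ ^ 2) :
    s ∈ subdiffR f x := by
  intro y
  have hlim : Tendsto (fun t : ℝ => f y + τ * t * ‖y - x‖ ^ 2) (𝓝[>] 0) (𝓝 (f y)) := by
    have : Continuous fun t : ℝ => f y + τ * t * ‖y - x‖ ^ 2 := by fun_prop
    simpa using (this.tendsto 0).mono_left nhdsWithin_le_nhds
  refine ge_of_tendsto hlim ?_
  filter_upwards [eventually_lineMap_nhdsGT h y] with t ⟨⟨ht0, ht1⟩, hz⟩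
  have hconv : f (lineMap x y t) ≤ (1 - t) * f x + t * f y := by
    simpa [lineMap_apply_module] using
      hf.2 (mem_univ x) (mem_univ y) (sub_nonneg.2 ht1.le) ht0.le (sub_add_cancel 1 t)
  rw [← vsub_eq_sub, lineMap_vsub_left, vsub_eq_sub, real_inner_smul_right, norm_smul,
    Real.norm_of_nonneg ht0.le] at hz
  have : t * (f x + ⟪s, y - x⟫) ≤ t * (f y + τ * t * ‖y - x‖ ^ 2) := by nlinarith
  exact le_of_mul_le_mul_left this ht0

lemma mem_subdiffE_of_eventually_le {φ : E d → EReal} (hφ : ConvexE φ) {x s : E d}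
    (hx : φ x ≠ ⊤) (h : ∀ᶠ y in 𝓝 x, φ x + ((⟪s, y - x⟫ : ℝ) : EReal) ≤ φ y) :
    s ∈ subdiffE φ x := by
  intro y
  rcases eq_or_ne (φ x) ⊥ with hbot | hbot
  · simp [hbot]
  obtain ⟨t, ⟨ht0, ht1⟩, hz⟩ := (eventually_lineMap_nhdsGT h y).exists
  have hconv := hφ x y (1 - t) t (sub_nonneg.2 ht1.le) ht0.le (sub_add_cancel 1 t)
  rw [← lineMap_apply_module] at hconv
  rw [← vsub_eq_sub, lineMap_vsub_left, vsub_eq_sub, real_inner_smul_right] at hz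
  lift φ x to ℝ using ⟨hx, hbot⟩ with a
  exact EReal.add_coe_le_of_add_le_lineMap ht0 (hz.trans hconv)

lemma exists_mem_subdiffR_dist_lt {f ψ : E d → ℝ} (hf : ConvexOn ℝ univ f) {u ξ : E d}
    {r τ ε : ℝ} (hr : 0 < r) (hτ : 0 < τ) (hε : 2 * ε < τ * r ^ 2)
    (hfψ : ∀ w ∈ closedBall u r, |f w - ψ w| ≤ ε)
    (hξ : ∀ w ∈ closedBall u r, ψ u + ⟪ξ, w - u⟫ ≤ ψ w) :
    ∃ x, ∃ s ∈ subdiffR f x, dist ξ s < 2 * τ * r := by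
  set g : E d → ℝ := fun y => f y - ⟪ξ, y⟫ + τ * ‖y - u‖ ^ 2 with hg
  have hfc : Continuous f := continuousOn_univ.1 (hf.continuousOn isOpen_univ)
  have hgc : Continuous g := by fun_prop
  have hu : u ∈ closedBall u r := mem_closedBall_self hr.le
  obtain ⟨x, hxB, hmin⟩ := (isCompact_closedBall u r).exists_isMinOn ⟨u, hu⟩ hgc.continuousOn
  have hxu : ‖x - u‖ < r := by
    have hgxu : g x ≤ g u := hmin hu
    have hx := abs_le.1 (hfψ x hxB)
    have hu' := abs_le.1 (hfψ u hu)
    have hξx := hξ x hxB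
    simp only [hg, sub_self, norm_zero] at hgxu
    rw [inner_sub_right] at hξx
    have : τ * ‖x - u‖ ^ 2 < τ * r ^ 2 := by nlinarith
    exact (pow_lt_pow_iff_left₀ (norm_nonneg _) hr.le two_ne_zero).1
      (lt_of_mul_lt_mul_left this hτ.le)
  refine ⟨x, ξ - (2 * τ) • (x - u), ?_, ?_⟩
  · refine mem_subdiffR_of_eventually_le_add_sq hf (τ := τ) ?_
    have hnhds : closedBall u r ∈ 𝓝 x :=
      mem_of_superset (isOpen_ball.mem_nhds (mem_ball_iff_norm.2 hxu)) ball_subset_closedBall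
    filter_upwards [hnhds] with y hy
    have hgxy : g x ≤ g y := hmin hy
    have hsq : ‖y - u‖ ^ 2 = ‖y - x‖ ^ 2 + 2 * ⟪y - x, x - u⟫ + ‖x - u‖ ^ 2 := by
      rw [← norm_add_sq_real, sub_add_sub_cancel]
    simp only [hg] at hgxy
    rw [inner_sub_left, real_inner_smul_left, inner_sub_right, real_inner_comm (y - x) (x - u)]
    nlinarith
  · rw [dist_eq_norm, sub_sub_cancel, norm_smul, Real.norm_of_nonneg (by positivity)]
    gcongr

theorem mem_of_mem_subdiffE_of_tendstoUniformlyOn {ι : Type*} {p : Filter ι} [p.NeBot]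
    {F : ι → E d → ℝ} (hF : ∀ i, ConvexOn ℝ univ (F i)) {S : Set (E d)} (hS : IsClosed S)
    (hFS : ∀ i x, subdiffR (F i) x ⊆ S) {φ : E d → EReal} {K' : Set (E d)}
    (hfin : ∀ u ∈ K', φ u ≠ ⊤ ∧ φ u ≠ ⊥)
    (hunif : TendstoUniformlyOn F (fun x => (φ x).toReal) p K') {u ξ : E d}
    (hu : u ∈ interior K') (hξ : ξ ∈ subdiffE φ u) : ξ ∈ S := by
  obtain ⟨r, hr, hrK'⟩ := nhds_basis_closedBall.mem_iff.1 (mem_interior_iff_mem_nhds.1 hu)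
  refine hS.closure_subset (Metric.mem_closure_iff.2 fun ε hε => ?_)
  set τ := ε / (2 * r)
  have hτ : 0 < τ := by positivity
  obtain ⟨i, hi⟩ := (Metric.tendstoUniformlyOn_iff.1 hunif (τ * r ^ 2 / 4) (by positivity)).exists
  obtain ⟨x, s, hs, hdist⟩ := exists_mem_subdiffR_dist_lt (ψ := fun x => (φ x).toReal)
    (ε := τ * r ^ 2 / 4) (hF i) hr hτ
    (by nlinarith [mul_pos hτ (pow_pos hr 2)])
    (fun w hw => by rw [← Real.dist_eq, dist_comm]; exact (hi w (hrK' hw)).le)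
    (fun w hw => (EReal.add_coe_le_iff_toReal (hfin u (hrK' (mem_closedBall_self hr.le)))
      (hfin w (hrK' hw)) _).1 (hξ w))
  refine ⟨s, hFS i x hs, ?_⟩
  have : 2 * τ * r = ε := by simp only [τ]; field_simp
  linarith

theorem mem_subdiffE_of_tendsto {ι : Type*} {p : Filter ι} [p.NeBot] {F : ι → E d → ℝ}
    {φ : E d → EReal} (hφ : ConvexE φ) {K' : Set (E d)} (hfin : ∀ u ∈ K', φ u ≠ ⊤ ∧ φ u ≠ ⊥)
    (hunif : TendstoUniformlyOn F (fun x => (φ x).toReal) p K')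
    (hcont : ContinuousOn (fun x => (φ x).toReal) K') {u ξ : ι → E d} {u₀ ξ₀ : E d}
    (hu : Tendsto u p (𝓝 u₀)) (hξ : Tendsto ξ p (𝓝 ξ₀)) (hu₀ : u₀ ∈ interior K')
    (hsub : ∀ i, ξ i ∈ subdiffR (F i) (u i)) : ξ₀ ∈ subdiffE φ u₀ := by
  have hK' : K' ∈ 𝓝 u₀ := mem_interior_iff_mem_nhds.1 hu₀
  have hu₀K' : u₀ ∈ K' := mem_of_mem_nhds hK'
  have hlim : Tendsto (fun i => F i (u i)) p (𝓝 (φ u₀).toReal) :=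
    hunif.tendsto_comp (hcont.continuousWithinAt hu₀K')
      (tendsto_nhdsWithin_iff.2 ⟨hu, hu.eventually_mem hK'⟩)
  refine mem_subdiffE_of_eventually_le hφ (hfin u₀ hu₀K').1 ?_
  filter_upwards [hK'] with y hy
  rw [EReal.add_coe_le_iff_toReal (hfin u₀ hu₀K') (hfin y hy)]
  exact le_of_tendsto_of_tendsto' (hlim.add (hξ.inner (tendsto_const_nhds.sub hu)))
    (hunif.tendsto_at hy) fun i => hsub i y

theorem eventually_subdiffR_image_subset_thickening {F : ℕ → E d → ℝ} {φ : E d → EReal}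
    (hφ : ConvexE φ) {S : Set (E d)} (hS : IsCompact S) (hFS : ∀ n x, subdiffR (F n) x ⊆ S)
    {K K' : Set (E d)} (hK : IsCompact K) (hKK' : K ⊆ interior K')
    (hfin : ∀ u ∈ K', φ u ≠ ⊤ ∧ φ u ≠ ⊥)
    (hunif : TendstoUniformlyOn F (fun x => (φ x).toReal) atTop K')
    (hcont : ContinuousOn (fun x => (φ x).toReal) K') {δ : ℝ} (hδ : 0 < δ) :
    ∀ᶠ n in atTop, {ξ : E d | ∃ u ∈ K, ξ ∈ subdiffR (F n) u} ⊆
      thickening δ {ξ : E d | ∃ u ∈ K, ξ ∈ subdiffE φ u} := by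
  by_contra h
  obtain ⟨n, hn, hbad⟩ := extraction_of_frequently_atTop (not_eventually.1 h)
  choose ξ hξ hξδ using fun k => not_subset.1 (hbad k)
  choose u huK hξu using hξ
  obtain ⟨⟨u₀, ξ₀⟩, ⟨hu₀, -⟩, m, hm, hlim⟩ :=
    (hK.prod hS).tendsto_subseq fun k => mk_mem_prod (huK k) (hFS _ _ (hξu k))
  have hξ₀ : ξ₀ ∈ subdiffE φ u₀ :=
    mem_subdiffE_of_tendsto hφ hfin (hunif.seq_tendstoUniformlyOn _ (hn.comp hm).tendsto_atTop)
      hcont hlim.fst_nhds hlim.snd_nhds (hKK' hu₀) fun k => hξu (m k)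
  obtain ⟨k, hk⟩ := (hlim.snd_nhds.eventually (ball_mem_nhds ξ₀ hδ)).exists
  exact hξδ (m k) (mem_thickening_iff.2 ⟨ξ₀, ⟨u₀, hu₀, hξ₀⟩, hk⟩)

theorem statement14_general {d : ℕ} (φn : ℕ → E d → ℝ)
    (hconv : ∀ n, ConvexOn ℝ Set.univ (φn n))
    (S : Set (E d)) (hS : IsCompact S) (hsub : ∀ n x, subdiffR (φn n) x ⊆ S)
    (K K' : Set (E d)) (hK : IsCompact K) (hKK' : K ⊆ interior K')
    (φ : E d → EReal) (hφ : ConvexE φ)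
    (hfin : ∀ u ∈ K', φ u ≠ ⊤ ∧ φ u ≠ ⊥)
    (hunif : ∀ ε > (0 : ℝ), ∃ N : ℕ, ∀ n ≥ N, ∀ u ∈ K', |φn n u - (φ u).toReal| ≤ ε) :
    ({ξ : E d | ∃ u ∈ K, ξ ∈ subdiffE φ u} ⊆ S) ∧
    (∀ δ > (0 : ℝ), ∃ n₀ : ℕ, ∀ n ≥ n₀,
      {ξ : E d | ∃ u ∈ K, ξ ∈ subdiffR (φn n) u} ⊆
        ⋃ x ∈ {ξ : E d | ∃ u ∈ K, ξ ∈ subdiffE φ u}, Metric.ball x δ) := by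
  have hunif' : TendstoUniformlyOn φn (fun x => (φ x).toReal) atTop K' := by
    refine Metric.tendstoUniformlyOn_iff.2 fun ε hε => ?_
    obtain ⟨N, hN⟩ := hunif (ε / 2) (half_pos hε)
    filter_upwards [eventually_ge_atTop N] with n hn x hx
    rw [dist_comm, Real.dist_eq]
    exact (hN n hn x hx).trans_lt (half_lt_self hε)
  have hcont : ContinuousOn (fun x => (φ x).toReal) K' :=
    hunif'.continuousOn (Frequently.of_forall fun n =>
      ((hconv n).continuousOn isOpen_univ).mono (subset_univ K'))
  refine ⟨fun ξ ⟨u, hu, hξ⟩ => mem_of_mem_subdiffE_of_tendstoUniformlyOn hconv hS.isClosed hsub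
    hfin hunif' (hKK' hu) hξ, fun δ hδ => ?_⟩
  obtain ⟨n₀, hn₀⟩ := eventually_atTop.1 (eventually_subdiffR_image_subset_thickening hφ hS hsub
    hK hKK' hfin hunif' hcont hδ)
  exact ⟨n₀, fun n hn => (hn₀ n hn).trans thickening_eq_biUnion_ball.subset⟩

/-- Under the same setup as uniform convergence of convex functions on `K'`
(with `K ⊆ Int K'`), the limit's subdifferential image `∂φ(K)` lies in `S`, and for every
`δ > 0` the subdifferential images `∂φ_n(K)` eventually lie in the δ-neighborhood
`∪_{x ∈ ∂φ(K)} B_δ(x)`. -/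
theorem statement14 {d : ℕ} (φn : ℕ → E d → ℝ)
    (hconv : ∀ n, ConvexOn ℝ Set.univ (φn n)) (hzero : ∀ n, φn n 0 = 0)
    (S : Set (E d)) (hS : IsCompact S) (hsub : ∀ n x, subdiffR (φn n) x ⊆ S)
    (K K' : Set (E d)) (hK : IsCompact K) (hK' : IsCompact K') (hKK' : K ⊆ interior K')
    (φ : E d → EReal) (hφ : ConvexE φ)
    (hfin : ∀ u ∈ K', φ u ≠ ⊤ ∧ φ u ≠ ⊥)
    (hunif : ∀ ε > (0 : ℝ), ∃ N : ℕ, ∀ n ≥ N, ∀ u ∈ K', |φn n u - (φ u).toReal| ≤ ε) :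
    ({ξ : E d | ∃ u ∈ K, ξ ∈ subdiffE φ u} ⊆ S) ∧
    (∀ δ > (0 : ℝ), ∃ n₀ : ℕ, ∀ n ≥ n₀,
      {ξ : E d | ∃ u ∈ K, ξ ∈ subdiffR (φn n) u} ⊆
        ⋃ x ∈ {ξ : E d | ∃ u ∈ K, ξ ∈ subdiffE φ u}, Metric.ball x δ) :=
  statement14_general φn hconv S hS hsub K K' hK hKK' φ hφ hfin hunif
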